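/- arXiv:1706.06014 — 4 statements merged into one kernel-verified Lean document; each statement's English description precedes it below -/
import Mathlib

section
/- Let V be a finite-dimensional real vector space equipped with r skew-symmetric bilinear forms ω₁,...,ω_r such that the intersection of their kernels is {0}. If L ≤ V is a subspace such that the map ω♯ : L → Ann(L) ⊗ ℝ^r defined by X ↦ (ω₁(X,·),...,ω_r(X,·)) is a linear isomorphism, then L^ω = L, where L^ω = {X ∈ V : ω_i(X,Y) = 0 for all Y ∈ L and all i}. -/
/-- If `ω♯ : L → Ann(L) ⊗ ℝ^r` is a linear isomorphism, then `L^ω = L`. -/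
theorem stmt_0 (V : Type*) [AddCommGroup V] [Module ℝ V] [FiniteDimensional ℝ V]
    (r : ℕ) (ω : Fin r → (V →ₗ[ℝ] V →ₗ[ℝ] ℝ))
    (hskew : ∀ j x y, ω j x y = - ω j y x)
    (hnondeg : ∀ x : V, (∀ j, ∀ y, ω j x y = 0) → x = 0)
    (L : Submodule ℝ V)
    -- ω♯ maps L into Ann(L) ⊗ ℝ^r
    (hmaps : ∀ x ∈ L, ∀ j, ∀ y ∈ L, ω j x y = 0)
    -- ω♯ is injective on L
    (hinj : ∀ x ∈ L, (∀ j, ω j x = 0) → x = 0)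
    -- ω♯ is surjective from L onto Ann(L) ⊗ ℝ^r
    (hsurj : ∀ η : Fin r → (V →ₗ[ℝ] ℝ), (∀ j, ∀ y ∈ L, η j y = 0) →
      ∃ x ∈ L, ∀ j, ω j x = η j) :
    {X : V | ∀ j, ∀ y ∈ L, ω j X y = 0} = (L : Set V) := by
  ext X
  constructor
  · intro hX
    obtain ⟨x, hxL, hx⟩ := hsurj (fun j => ω j X) hX
    have : X - x = 0 := by
      apply hnondeg
      intro j y
      have := congrArg (fun f => f y) (hx j)
      simp only [map_sub, LinearMap.sub_apply]
      linarith [this]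
    exact (sub_eq_zero.mp this) ▸ hxL
  · intro hX j y hy
    exact hmaps X hX j y hy
end

section
/- Let V be a finite-dimensional real vector space, S ≤ V* ⊗ ℝ^r a subspace with S° := {X ∈ V : η(X) = 0 ∀η ∈ S} = {0} (where η=(η₁,...,η_r) acts by η(X)=(η₁(X),...,η_r(X))), and P : S → V a linear map with η(P(η)) = 0 for all η ∈ S. Then for any subspace L ≤ V, the following are equivalent: (a) P(S ∩ (Ann(L) ⊗ ℝ^r)) ⊆ L; (b) Ann(L) ⊗ ℝ^r ⊆ (S ∩ (Ann(L) ⊗ ℝ^r))^⊥, where for W ⊆ S, W^⊥ := {β ∈ V* ⊗ ℝ^r : β(P(α)) = 0 ∀α ∈ W}. -/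
/-- For linear `r`-Poisson data `(S, P)` on `V` and a subspace `L`,
condition (a) `P(S ∩ Ann(L)⊗ℝ^r) ⊆ L` is equivalent to
condition (b) `Ann(L)⊗ℝ^r ⊆ (S ∩ Ann(L)⊗ℝ^r)^⊥`. -/
theorem stmt_3 (V : Type*) [AddCommGroup V] [Module ℝ V] [FiniteDimensional ℝ V]
    (r : ℕ) (S : Submodule ℝ (Fin r → Module.Dual ℝ V)) (P : S →ₗ[ℝ] V)
    -- (i) ι_{P(η)} η = 0
    (hiso : ∀ η : S, ∀ j, (η : Fin r → Module.Dual ℝ V) j (P η) = 0)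
    -- (ii) S° = {0}
    (hSo : ∀ X : V, (∀ η ∈ S, ∀ j, η j X = 0) → X = 0)
    (L : Submodule ℝ V) :
    -- (a) P(S ∩ Ann(L) ⊗ ℝ^r) ⊆ L
    ((∀ η : S, (∀ j, ∀ y ∈ L, (η : Fin r → Module.Dual ℝ V) j y = 0) → P η ∈ L)
    ↔
    -- (b) Ann(L) ⊗ ℝ^r ⊆ (S ∩ Ann(L) ⊗ ℝ^r)^⊥
    (∀ β : Fin r → Module.Dual ℝ V, (∀ j, ∀ y ∈ L, β j y = 0) →
      ∀ α : S, (∀ j, ∀ y ∈ L, (α : Fin r → Module.Dual ℝ V) j y = 0) →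
        ∀ j, β j (P α) = 0)) := by
  constructor
  · intro ha β hβ α hα j
    exact hβ j (P α) (ha α hα)
  · intro hb α hα
    by_contra hmem
    obtain ⟨f, hf, hf'⟩ := L.exists_dual_map_eq_bot_of_notMem hmem inferInstance
    have hfL : ∀ y ∈ L, f y = 0 := by
      intro y hy
      have : f y ∈ L.map f := Submodule.mem_map_of_mem hy
      rwa [hf', Submodule.mem_bot] at this
    rcases Nat.eq_zero_or_pos r with h0 | hr
    · subst h0
      have : P α = 0 := hSo _ (fun η _ j => absurd j.2 (by omega))
      exact hmem (this ▸ L.zero_mem)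
    · exact hf (hb (fun _ => f) (fun _ => hfL) α hα ⟨0, hr⟩)
end

section
/- Let (V, ω) be an r-symplectic vector space with induced r-Poisson data (S_ω, P_ω), and let U ≤ V be a subspace (playing the role of the vertical bundle of a group action). Then (S_ω ∩ (Ann(U) ⊗ ℝ^r))° — the set of vectors annihilated by all elements of S_ω ∩ (Ann(U) ⊗ ℝ^r) — equals (U^ω)^ω, the double ω-orthogonal of U. -/
/-- For an `r`-symplectic vector space `(V, ω)` with induced data
`(S_ω, P_ω)` and a subspace `U ≤ V`, the annihilated set
`(S_ω ∩ (Ann(U) ⊗ ℝ^r))°` equals the double orthogonal `(U^ω)^ω`. -/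
theorem stmt_12 (V : Type*) [AddCommGroup V] [Module ℝ V] [FiniteDimensional ℝ V]
    (r : ℕ) (ω : Fin r → (V →ₗ[ℝ] V →ₗ[ℝ] ℝ))
    (hskew : ∀ j x y, ω j x y = - ω j y x)
    (hnondeg : ∀ x : V, (∀ j, ∀ y, ω j x y = 0) → x = 0)
    (U : Submodule ℝ V) :
    {x : V | ∀ η : Fin r → (V →ₗ[ℝ] ℝ),
        ((∃ X : V, ∀ j, η j = ω j X) ∧ ∀ j, ∀ u ∈ U, η j u = 0) → ∀ j, η j x = 0}
    =
    {x : V | ∀ j, ∀ y ∈ {z : V | ∀ i, ∀ u ∈ U, ω i z u = 0}, ω j x y = 0} := by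
  ext x
  simp only [Set.mem_setOf_eq]
  constructor
  · intro h j y hy
    have := h (fun i => ω i y) ⟨⟨y, fun _ => rfl⟩, fun i u hu => hy i u hu⟩ j
    rw [hskew, this, neg_zero]
  · intro h η ⟨⟨X, hX⟩, hU⟩ j
    have hXmem : ∀ i, ∀ u ∈ U, ω i X u = 0 := fun i u hu => by
      rw [← hX i]; exact hU i u hu
    rw [hX j, hskew, h j X hXmem, neg_zero]
end

section
/- Let f : V → W be a linear map between finite-dimensional vector spaces, each equipped with linear r-Poisson data (S_V, P_V) and (S_W, P_W). Suppose f*S_W ⊆ S_V (pullback of each r-tuple of covectors lands in S_V, acting componentwise) and the graph Q = {(v, f(v))} ≤ V × W is coisotropic for the product-type structure on V × W̄ (W with opposite sign of P), i.e. P_{V×W̄}(S_{V×W̄} ∩ (Ann(Q) ⊗ ℝ^r)) ⊆ Q, where S_{V×W̄} = {(α, β) : α ∈ S_V, β ∈ S_W} and P_{V×W̄}(α, β) = (P_V(α), −P_W(β)). Then f is a poly-Poisson morphism: for all β ∈ S_W, P_V(f*β) is well-defined and f(P_V(f*β)) = P_W(β). -/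
/-- Linear characterization of poly-Poisson morphisms. If
`f : V → W` satisfies `f*S_W ⊆ S_V` and its graph is coisotropic in `V × W̄`
(for the product structure with `P(α,β) = (P_V(α), −P_W(β))`), then `f` is a
poly-Poisson morphism: `f(P_V(f*β)) = P_W(β)` for all `β ∈ S_W`. -/
theorem stmt_18 (V W : Type*) [AddCommGroup V] [Module ℝ V] [FiniteDimensional ℝ V]
    [AddCommGroup W] [Module ℝ W] [FiniteDimensional ℝ W]
    (r : ℕ) (f : V →ₗ[ℝ] W)
    (SV : Submodule ℝ (Fin r → Module.Dual ℝ V))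
    (SW : Submodule ℝ (Fin r → Module.Dual ℝ W))
    (PV : (Fin r → Module.Dual ℝ V) →ₗ[ℝ] V)
    (PW : (Fin r → Module.Dual ℝ W) →ₗ[ℝ] W)
    -- linear r-Poisson conditions on (S_V, P_V)
    (hisoV : ∀ η ∈ SV, ∀ j, η j (PV η) = 0)
    (hSoV : ∀ x : V, (∀ η ∈ SV, ∀ j, η j x = 0) → x = 0)
    -- linear r-Poisson conditions on (S_W, P_W)
    (hisoW : ∀ η ∈ SW, ∀ j, η j (PW η) = 0)
    (hSoW : ∀ w : W, (∀ η ∈ SW, ∀ j, η j w = 0) → w = 0)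
    -- f* S_W ⊆ S_V
    (hpull : ∀ β ∈ SW, (fun j => (β j).comp f) ∈ SV)
    -- the graph Q of f is coisotropic in V × W̄ : for (α, β) ∈ S_{V×W̄} annihilating
    -- Q, the anchor value (P_V(α), −P_W(β)) is tangent to Q
    (hcoiso : ∀ α ∈ SV, ∀ β ∈ SW,
      (∀ j : Fin r, ∀ v : V, α j v + β j (f v) = 0) → f (PV α) = - PW β) :
    ∀ β ∈ SW, (fun j => (β j).comp f) ∈ SV ∧ f (PV (fun j => (β j).comp f)) = PW β := by
  intro β hβ
  refine ⟨hpull β hβ, ?_⟩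
  have h := hcoiso (-(fun j => (β j).comp f)) (neg_mem (hpull β hβ)) β hβ
    (by intro j v; simp)
  have : f (PV (-(fun j => (β j).comp f))) = -f (PV (fun j => (β j).comp f)) := by
    rw [map_neg, map_neg]
  rw [this] at h
  exact neg_injective h
end
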